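/- Lech-independence is preserved under flat base change: if x₁,…,xₙ is a Lech-independent sequence in a commutative noetherian local ring R and R → S is a flat ring map of noetherian local rings with (x₁,…,xₙ)S a proper ideal, then the images of x₁,…,xₙ in S form a Lech-independent sequence. -/

import Mathlib

/-- The canonical map `Rⁿ → I/I²` sending the `i`-th basis vector to the class of `xᵢ`,
where `I = (x₁,…,xₙ)`. -/
noncomputable def lechMap {R : Type*} [CommRing R] {n : ℕ} (x : Fin n → R) :
    (Fin n → R) →ₗ[R] (Ideal.span (Set.range x)).Cotangent :=
  Fintype.linearCombination R fun i =>
    (Ideal.span (Set.range x)).toCotangent ⟨x i, Ideal.subset_span ⟨i, rfl⟩⟩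

/-- The sequence `x₁,…,xₙ` is Lech-independent: the canonical surjection
`(R/I)ⁿ → I/I²`, `eᵢ ↦ xᵢ mod I²` (for `I = (x₁,…,xₙ)`) is an isomorphism.  This is
encoded by saying that the induced map `Rⁿ → I/I²` is surjective with kernel exactly
`Iⁿ ⊆ Rⁿ`. -/
def IsLechIndependent {R : Type*} [CommRing R] {n : ℕ} (x : Fin n → R) : Prop :=
  Function.Surjective (lechMap x) ∧
    LinearMap.ker (lechMap x) =
      Submodule.pi Set.univ fun _ : Fin n => (Ideal.span (Set.range x) : Submodule R R)

section Aux

open TensorProduct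

variable {R : Type*} [CommRing R] {n : ℕ}

theorem sum_mem_span_aux (x a : Fin n → R) :
    ∑ i, a i * x i ∈ Ideal.span (Set.range x) :=
  Ideal.sum_mem _ fun i _ => Ideal.mul_mem_left _ _ (Ideal.subset_span ⟨i, rfl⟩)

theorem lechMap_apply_aux (x a : Fin n → R) :
    lechMap x a
      = (Ideal.span (Set.range x)).toCotangent ⟨∑ i, a i * x i, sum_mem_span_aux x a⟩ := by
  rw [lechMap, Fintype.linearCombination_apply]
  simp only [← map_smul, ← map_sum]
  refine congrArg _ (Subtype.ext ?_)
  push_cast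
  simp [smul_eq_mul]

theorem mem_ker_lechMap_aux (x a : Fin n → R) :
    a ∈ LinearMap.ker (lechMap x) ↔ ∑ i, a i * x i ∈ Ideal.span (Set.range x) ^ 2 := by
  rw [LinearMap.mem_ker, lechMap_apply_aux, Ideal.toCotangent_eq_zero]

theorem lechMap_surjective_aux (x : Fin n → R) : Function.Surjective (lechMap x) := by
  intro c
  obtain ⟨⟨y, hy⟩, rfl⟩ := Ideal.toCotangent_surjective _ c
  obtain ⟨a, ha⟩ := (Submodule.mem_span_range_iff_exists_fun R).1 hy
  refine ⟨a, ?_⟩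
  rw [lechMap_apply_aux]
  exact congrArg _ (Subtype.ext (by simpa [smul_eq_mul] using ha))

end Aux

set_option maxHeartbeats 1000000 in
set_option synthInstance.maxHeartbeats 400000 in
/-- Lech-independence is preserved by flat base change: if `R → S` is a flat map of
noetherian local rings and `(x₁,…,xₙ)S` is proper, then the image in `S` of a
Lech-independent sequence of `R` is Lech-independent. -/
theorem isLechIndependent_of_flat_baseChange {R S : Type*} [CommRing R] [IsNoetherianRing R]
    [IsLocalRing R] [CommRing S] [IsNoetherianRing S] [IsLocalRing S] [Algebra R S]
    [Module.Flat R S] {n : ℕ} (x : Fin n → R) (hlech : IsLechIndependent x)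
    (hproper : Ideal.span (Set.range fun i => algebraMap R S (x i)) ≠ ⊤) :
    IsLechIndependent fun i => algebraMap R S (x i) := by
  classical
  open TensorProduct in
  obtain ⟨-, hker⟩ := hlech
  set f : R →+* S := algebraMap R S with hf
  set g : Fin n → S := fun i => f (x i) with hg
  set I : Ideal R := Ideal.span (Set.range x) with hI
  set J : Ideal S := Ideal.span (Set.range g) with hJ
  have hJmap : J = I.map f := by
    rw [hJ, hI, Ideal.map_span]
    congr 1
    rw [← Set.range_comp]
    rfl
  refine ⟨lechMap_surjective_aux _, le_antisymm ?_ ?_⟩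
  · -- ker ⊆ Jⁿ
    intro b hb
    rw [mem_ker_lechMap_aux] at hb
    -- peel off the J² part
    have h1 : ∑ i, b i * g i ∈ J • (Submodule.span S (Set.range g)) := by
      rw [show (Submodule.span S (Set.range g)) = (J : Submodule S S) from rfl,
        Ideal.smul_eq_mul, ← pow_two]
      exact hb
    obtain ⟨c, hcJ, hcsum⟩ := (Submodule.mem_ideal_smul_span_iff_exists_sum J g _).1 h1
    have hcsum' : ∑ i, c i * g i = ∑ i, b i * g i := by
      rw [← hcsum, Finsupp.sum_fintype]
      · simp [smul_eq_mul]
      · intro i; simp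
    set b' : Fin n → S := fun i => b i - (c i : S) with hb'
    have hrel : ∑ i, x i • b' i = 0 := by
      simp only [hb', Algebra.smul_def, mul_sub, Finset.sum_sub_distrib]
      rw [sub_eq_zero]
      calc ∑ i, f (x i) * b i = ∑ i, b i * g i := by
            simp [hg, mul_comm]
        _ = ∑ i, c i * g i := hcsum'.symm
        _ = ∑ i, f (x i) * c i := by simp [hg, mul_comm]
    -- it suffices to show each b' i ∈ J
    have hkey : ∀ i, b' i ∈ J := by
      set φ : (Fin n → R) →ₗ[R] R := Fintype.linearCombination R x with hφ
      have hK : LinearMap.ker φ ≤ Submodule.pi Set.univ fun _ : Fin n => (I : Submodule R R) := by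
        intro a ha
        rw [LinearMap.mem_ker, hφ, Fintype.linearCombination_apply] at ha
        have : a ∈ LinearMap.ker (lechMap x) := by
          rw [mem_ker_lechMap_aux]
          simp only [← smul_eq_mul]
          rw [ha]
          exact zero_mem _
        rwa [hker] at this
      set e : S ⊗[R] (Fin n → R) ≃ₗ[S] (Fin n → S) := TensorProduct.piScalarRight R S S (Fin n)
        with he
      set ψ : S ⊗[R] (Fin n → R) →ₗ[S] S ⊗[R] R := AlgebraTensorModule.lTensor S S φ with hψ
      set rid : S ⊗[R] R ≃ₗ[S] S := AlgebraTensorModule.rid R S S with hrid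
      have hcomm : ∀ t : S ⊗[R] (Fin n → R), rid (ψ t) = ∑ i, x i • (e t) i := by
        intro t
        induction t with
        | zero => simp
        | tmul s a =>
          simp only [hψ, AlgebraTensorModule.lTensor_tmul, hφ,
            Fintype.linearCombination_apply, hrid, AlgebraTensorModule.rid_tmul, he,
            TensorProduct.piScalarRight_apply, TensorProduct.piScalarRightHom_tmul]
          rw [Finset.sum_smul]
          refine Finset.sum_congr rfl fun i _ => ?_
          rw [smul_smul, mul_comm]
          rfl
        | add t₁ t₂ ih₁ ih₂ =>
          simp [map_add, ih₁, ih₂, Finset.sum_add_distrib, smul_add]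
      have ht0 : ψ (e.symm b') = 0 := by
        apply rid.injective
        rw [map_zero, hcomm, e.apply_symm_apply]
        exact hrel
      have hmem : e.symm b' ∈ LinearMap.ker ψ := ht0
      rw [hψ, Module.Flat.ker_lTensor_eq] at hmem
      obtain ⟨u, hu⟩ := hmem
      have hb'' : b' = e ((AlgebraTensorModule.lTensor S S (LinearMap.ker φ).subtype) u) := by
        rw [hu, e.apply_symm_apply]
      have hgen : ∀ u : S ⊗[R] (LinearMap.ker φ), ∀ i,
          e ((AlgebraTensorModule.lTensor S S (LinearMap.ker φ).subtype) u) i ∈ J := by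
        intro u
        induction u with
        | zero => intro i; simp
        | tmul s a =>
          intro i
          simp only [AlgebraTensorModule.lTensor_tmul, he, TensorProduct.piScalarRight_apply,
            TensorProduct.piScalarRightHom_tmul, Submodule.coe_subtype]
          have hai : (a : Fin n → R) i ∈ I := by
            have := hK a.2
            exact this i (Set.mem_univ i)
          rw [Algebra.smul_def]
          exact Ideal.mul_mem_right _ _ (hJmap ▸ Ideal.mem_map_of_mem f hai)
        | add t₁ t₂ ih₁ ih₂ =>
          intro i
          rw [map_add, map_add]
          exact add_mem (ih₁ i) (ih₂ i)
      intro i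
      rw [hb'']
      exact hgen u i
    intro i _
    have : b i = b' i + c i := by simp [hb']
    rw [this]
    exact add_mem (hkey i) (hcJ i)
  · -- Jⁿ ⊆ ker
    intro b hb
    rw [mem_ker_lechMap_aux, pow_two]
    exact Ideal.sum_mem _ fun i _ =>
      Ideal.mul_mem_mul (hb i (Set.mem_univ i)) (Ideal.subset_span ⟨i, rfl⟩)
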